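/- arXiv:1206.4864 — 5 statements merged into one kernel-verified Lean document; each statement's English description precedes it below -/
import Mathlib

section
/- If sequences a and b both satisfy homogeneous linear recurrences with constant coefficients of orders p and q respectively, then their pointwise product n ↦ a(n)·b(n) satisfies a homogeneous linear recurrence with constant coefficients of order at most p·q. -/
/-!
The state vector `(a (n + i) * b (n + j))_{i < p, j < q}` of the product is advanced one step by
the Kronecker product of the companion matrices of `a` and `b`, a `pq × pq` matrix. By
Cayley–Hamilton, every coordinate of a sequence of vectors driven by a fixed matrix satisfies the
recurrence given by its characteristic polynomial, whose order is the dimension `pq`.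
-/

/-- `a` satisfies a homogeneous linear recurrence with constant coefficients of order `L`. -/
def SatisfiesLinRec (a : ℕ → ℚ) (L : ℕ) : Prop :=
  ∃ c : Fin L → ℚ, ∀ n : ℕ, a (n + L) = ∑ i : Fin L, c i * a (n + i)

open Matrix Polynomial Finset
open scoped Kronecker

theorem Matrix.kronecker_mulVec_mul {R l m n o : Type*} [CommSemiring R] [Fintype m] [Fintype o]
    (A : Matrix l m R) (B : Matrix n o R) (x : m → R) (y : o → R) :
    (A ⊗ₖ B) *ᵥ (fun ij => x ij.1 * y ij.2) = fun ij => (A *ᵥ x) ij.1 * (B *ᵥ y) ij.2 := by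
  ext ⟨i, j⟩
  simp only [mulVec, dotProduct, kroneckerMap_apply, Fintype.sum_prod_type, sum_mul_sum]
  exact sum_congr rfl fun _ _ => sum_congr rfl fun _ _ => by ring

section Orbit

variable {R ι : Type*} [CommRing R] [Fintype ι] [DecidableEq ι] {M : Matrix ι ι R}
  {v : ℕ → ι → R}

theorem pow_mulVec_of_mulVec_eq_succ (hv : ∀ n, M *ᵥ v n = v (n + 1)) (k n : ℕ) :
    (M ^ k) *ᵥ v n = v (n + k) := by
  induction k with
  | zero => simp
  | succ k ih => rw [pow_succ', ← mulVec_mulVec, ih, hv, add_assoc]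

theorem add_card_eq_sum_charpoly_coeff [Nontrivial R] (hv : ∀ n, M *ᵥ v n = v (n + 1)) (n : ℕ) :
    v (n + Fintype.card ι) =
      ∑ i ∈ range (Fintype.card ι), -M.charpoly.coeff i • v (n + i) := by
  have hCH : M ^ Fintype.card ι + ∑ i ∈ range (Fintype.card ι), M.charpoly.coeff i • M ^ i = 0 := by
    have h := aeval_self_charpoly M
    rw [M.charpoly_monic.as_sum, charpoly_natDegree_eq_dim] at h
    simpa [Algebra.smul_def] using h
  rw [← pow_mulVec_of_mulVec_eq_succ hv, eq_neg_of_add_eq_zero_left hCH, neg_mulVec, sum_mulVec,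
    ← sum_neg_distrib]
  exact sum_congr rfl fun i _ => by rw [smul_mulVec, pow_mulVec_of_mulVec_eq_succ hv, neg_smul]

end Orbit

theorem satisfiesLinRec_zero_iff {a : ℕ → ℚ} : SatisfiesLinRec a 0 ↔ a = 0 :=
  ⟨fun ⟨_, hc⟩ => funext fun n => by simpa using hc n, fun h => ⟨0, fun n => by simp [h]⟩⟩

theorem satisfiesLinRec_of_mulVec {ι : Type*} [Fintype ι] [DecidableEq ι] {M : Matrix ι ι ℚ}
    {v : ℕ → ι → ℚ} (hv : ∀ n, M *ᵥ v n = v (n + 1)) (i : ι) :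
    SatisfiesLinRec (fun n => v n i) (Fintype.card ι) :=
  ⟨fun k => -M.charpoly.coeff k, fun n => by
    rw [Fin.sum_univ_eq_sum_range (fun k => -M.charpoly.coeff k * v (n + k) i)]
    simpa using congrFun (add_card_eq_sum_charpoly_coeff hv n) i⟩

def companion {R : Type*} [Zero R] [One R] {p : ℕ} (c : Fin p → R) : Matrix (Fin p) (Fin p) R :=
  of fun i => if h : (i : ℕ) + 1 < p then Pi.single ⟨i + 1, h⟩ 1 else c

theorem companion_mulVec {R : Type*} [Semiring R] {p : ℕ} {c : Fin p → R} {a : ℕ → R}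
    (hc : ∀ n, a (n + p) = ∑ i : Fin p, c i * a (n + i)) (n : ℕ) :
    companion c *ᵥ (fun i : Fin p => a (n + i)) = fun i : Fin p => a (n + 1 + i) := by
  ext i
  by_cases h : (i : ℕ) + 1 < p
  · simp only [companion, mulVec, of_apply, dif_pos h, single_one_dotProduct]
    congr 1
    omega
  · simp only [companion, mulVec, of_apply, dif_neg h, dotProduct]
    rw [show n + 1 + (i : ℕ) = n + p by omega, hc]

theorem cfinite_mul (a b : ℕ → ℚ) (p q : ℕ)
    (ha : SatisfiesLinRec a p) (hb : SatisfiesLinRec b q) :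
    ∃ L ≤ p * q, SatisfiesLinRec (fun n => a n * b n) L := by
  refine ⟨p * q, le_rfl, ?_⟩
  rcases p.eq_zero_or_pos with rfl | hp
  · rw [zero_mul, satisfiesLinRec_zero_iff]
    ext n
    simp [satisfiesLinRec_zero_iff.1 ha]
  rcases q.eq_zero_or_pos with rfl | hq
  · rw [mul_zero, satisfiesLinRec_zero_iff]
    ext n
    simp [satisfiesLinRec_zero_iff.1 hb]
  obtain ⟨c, hc⟩ := ha
  obtain ⟨d, hd⟩ := hb
  have hstep : ∀ n, (companion c ⊗ₖ companion d) *ᵥ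
      (fun ij : Fin p × Fin q => a (n + ij.1) * b (n + ij.2)) =
      fun ij => a (n + 1 + ij.1) * b (n + 1 + ij.2) := fun n => by
    rw [kronecker_mulVec_mul _ _ (fun i : Fin p => a (n + i)) (fun j : Fin q => b (n + j)),
      companion_mulVec hc, companion_mulVec hd]
  simpa using satisfiesLinRec_of_mulVec hstep (⟨0, hp⟩, ⟨0, hq⟩)
end

section
/- If a sequence satisfies a homogeneous linear recurrence of order L with constant coefficients and its first L terms are all zero, then the sequence is identically zero. Consequently, two C-finite sequences of orders at most p and q that agree on their first p+q terms are equal everywhere. -/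
private def shiftMap : Module.End ℚ (ℕ → ℚ) where
  toFun a := fun n => a (n + 1)
  map_add' _ _ := rfl
  map_smul' _ _ := rfl

private lemma shift_pow (k : ℕ) (a : ℕ → ℚ) (n : ℕ) :
    (shiftMap ^ k) a n = a (n + k) := by
  induction k generalizing a n with
  | zero => rfl
  | succ k ih =>
      rw [pow_succ']
      show ((shiftMap ^ k) a) (n + 1) = a (n + (k + 1))
      rw [ih]
      congr 1
      omega

private lemma aeval_apply (P : Polynomial ℚ) (a : ℕ → ℚ) (n : ℕ) :
    (Polynomial.aeval shiftMap P) a n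
      = ∑ i ∈ Finset.range (P.natDegree + 1), P.coeff i * a (n + i) := by
  rw [Polynomial.aeval_eq_sum_range]
  simp [LinearMap.sum_apply, shift_pow]

private lemma forward (a : ℕ → ℚ) (L : ℕ) (h : SatisfiesLinRec a L) :
    ∃ P : Polynomial ℚ, P.Monic ∧ P.natDegree = L ∧ Polynomial.aeval shiftMap P a = 0 := by
  obtain ⟨c, hc⟩ := h
  set q : Polynomial ℚ := ∑ i : Fin L, Polynomial.C (c i) * Polynomial.X ^ (i : ℕ) with hq
  have hqdeg : q.degree < L := by
    rcases Nat.eq_zero_or_pos L with h0 | h0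
    · subst h0
      simp [hq]
    · calc q.degree ≤ Finset.univ.sup (fun i : Fin L => ((i : ℕ) : WithBot ℕ)) := by
            apply (Polynomial.degree_sum_le _ _).trans
            apply Finset.sup_mono_fun
            intro i _
            exact Polynomial.degree_C_mul_X_pow_le _ _
        _ < (L : WithBot ℕ) := by
            apply Finset.sup_lt_iff (by exact_mod_cast WithBot.bot_lt_coe L) |>.mpr
            intro i _
            exact_mod_cast i.isLt
  have hmonic : (Polynomial.X ^ L - q).Monic := Polynomial.monic_X_pow_sub hqdeg
  have hdeg : (Polynomial.X ^ L - q).natDegree = L := by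
    have hdeg' : (Polynomial.X ^ L - q).degree = (L : WithBot ℕ) := by
      rw [Polynomial.degree_sub_eq_left_of_degree_lt]
      · exact Polynomial.degree_X_pow L
      · rw [Polynomial.degree_X_pow]; exact hqdeg
    exact Polynomial.natDegree_eq_of_degree_eq_some hdeg'
  refine ⟨Polynomial.X ^ L - q, hmonic, hdeg, ?_⟩
  funext n
  have expand : (Polynomial.aeval shiftMap ((Polynomial.X : Polynomial ℚ) ^ L - q)) a n
      = a (n + L) - ∑ i : Fin L, c i * a (n + i) := by
    rw [map_sub]
    show ((Polynomial.aeval shiftMap ((Polynomial.X : Polynomial ℚ) ^ L)) a - (Polynomial.aeval shiftMap q) a) n = _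
    have h1 : (Polynomial.aeval shiftMap ((Polynomial.X : Polynomial ℚ) ^ L)) a n = a (n + L) := by
      rw [Polynomial.aeval_X_pow, shift_pow]
    have h2 : (Polynomial.aeval shiftMap q) a n = ∑ i : Fin L, c i * a (n + i) := by
      rw [hq, map_sum]
      show (∑ i : Fin L, Polynomial.aeval shiftMap (Polynomial.C (c i) * (Polynomial.X : Polynomial ℚ) ^ (i:ℕ))) a n = _
      rw [LinearMap.sum_apply, Finset.sum_apply]
      · apply Finset.sum_congr rfl
        intro i _
        rw [map_mul, Polynomial.aeval_C]
        show ((algebraMap ℚ (Module.End ℚ (ℕ → ℚ)) (c i)) ((Polynomial.aeval shiftMap ((Polynomial.X : Polynomial ℚ) ^ (i:ℕ))) a)) n = _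
        rw [Module.algebraMap_end_apply]
        show c i • ((Polynomial.aeval shiftMap ((Polynomial.X : Polynomial ℚ) ^ (i:ℕ))) a n) = _
        rw [Polynomial.aeval_X_pow, shift_pow, smul_eq_mul]
    show (Polynomial.aeval shiftMap ((Polynomial.X : Polynomial ℚ) ^ L)) a n - (Polynomial.aeval shiftMap q) a n = _
    rw [h1, h2]
  rw [expand, hc n]
  simp

private lemma backward (a : ℕ → ℚ) (L : ℕ) (P : Polynomial ℚ)
    (hm : P.Monic) (hd : P.natDegree = L) (h : Polynomial.aeval shiftMap P a = 0) :
    SatisfiesLinRec a L := by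
  refine ⟨fun i => -P.coeff i, fun n => ?_⟩
  have h0 : (Polynomial.aeval shiftMap P) a n = 0 := by rw [h]; rfl
  rw [aeval_apply, hd, Finset.sum_range_succ] at h0
  have hcL : P.coeff L = 1 := by rw [← hd]; exact hm.coeff_natDegree
  rw [hcL, one_mul] at h0
  have hval : a (n + L) = -∑ i ∈ Finset.range L, P.coeff i * a (n + i) := by linarith
  rw [hval, Fin.sum_univ_eq_sum_range (fun i => -P.coeff i * a (n + i)) L]
  rw [← Finset.sum_neg_distrib]
  apply Finset.sum_congr rfl
  intro i _
  ring

private lemma zero_test (a : ℕ → ℚ) (L : ℕ) (h : SatisfiesLinRec a L)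
    (h0 : ∀ n < L, a n = 0) : ∀ n, a n = 0 := by
  obtain ⟨c, hc⟩ := h
  intro n
  induction n using Nat.strong_induction_on with
  | _ n ih =>
    rcases lt_or_ge n L with hn | hn
    · exact h0 n hn
    · obtain ⟨m, rfl⟩ := Nat.exists_eq_add_of_le hn
      rw [add_comm L m, hc m]
      apply Finset.sum_eq_zero
      intro i _
      rw [ih (m + i) (by have := i.isLt; omega), mul_zero]

theorem cfinite_zero_test :
    (∀ (a : ℕ → ℚ) (L : ℕ), SatisfiesLinRec a L → (∀ n < L, a n = 0) → ∀ n, a n = 0) ∧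
    (∀ (a b : ℕ → ℚ) (p q : ℕ), SatisfiesLinRec a p → SatisfiesLinRec b q →
      (∀ n < p + q, a n = b n) → ∀ n, a n = b n) := by
  constructor
  · exact zero_test
  · intro a b p q ha hb hagree n
    obtain ⟨P, hPm, hPd, hPa⟩ := forward a p ha
    obtain ⟨Q, hQm, hQd, hQb⟩ := forward b q hb
    have hd : SatisfiesLinRec (a - b) (p + q) := by
      apply backward (a - b) (p + q) (P * Q) (hPm.mul hQm)
      · rw [Polynomial.natDegree_mul hPm.ne_zero hQm.ne_zero, hPd, hQd]
      · rw [map_sub]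
        have h1 : (Polynomial.aeval shiftMap (P * Q)) a = 0 := by
          rw [mul_comm, map_mul]
          show Polynomial.aeval shiftMap Q ((Polynomial.aeval shiftMap P) a) = 0
          rw [hPa, map_zero]
        have h2 : (Polynomial.aeval shiftMap (P * Q)) b = 0 := by
          rw [map_mul]
          show Polynomial.aeval shiftMap P ((Polynomial.aeval shiftMap Q) b) = 0
          rw [hQb, map_zero]
        rw [h1, h2, sub_zero]
    have := zero_test (a - b) (p + q) hd (fun m hm => by
      show a m - b m = 0
      rw [hagree m hm, sub_self]) n
    have : a n - b n = 0 := this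
    linarith
end

section
/- The set of C-finite sequences over a field forms a subalgebra of the algebra of all sequences: it contains constant sequences and is closed under addition, scalar multiplication, and pointwise multiplication. -/
/-! A sequence is C-finite exactly when all its shifts `n ↦ a (n + k)` lie in one finitely
generated subspace: a recurrence of order `L` keeps every shift in the span of the first `L`,
and conversely the increasing spans of the first `N` shifts must stabilise inside a finitely
generated space, at which point shift `N` is a combination of the earlier ones. Shifting
commutes with the pointwise operations, so for `a + b` and `a * b` one can take `V ⊔ W` and
`V * W`, which are again finitely generated. -/

/-- `a` is C-finite: it satisfies some homogeneous linear recurrence with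
constant coefficients. -/
def IsCFinite {K : Type*} [Field K] (a : ℕ → K) : Prop :=
  ∃ (L : ℕ) (c : Fin L → K), ∀ n : ℕ, a (n + L) = ∑ i : Fin L, c i * a (n + i)

namespace CFinite

open Submodule

variable {K : Type*} [Field K]

def shift (k : ℕ) : (ℕ → K) →ₗ[K] ℕ → K := LinearMap.funLeft K K (· + k)

lemma shift_succ (k : ℕ) (a : ℕ → K) : shift (k + 1) a = shift 1 (shift k a) := by
  ext n
  simp only [shift, LinearMap.funLeft_apply, add_right_comm, add_assoc]

def shiftSpan (a : ℕ → K) (N : ℕ) : Submodule K (ℕ → K) :=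
  span K (Set.range fun i : Fin N => shift i a)

lemma shiftSpan_mono (a : ℕ → K) : Monotone (shiftSpan a) := fun _ _ hNM =>
  span_mono <| Set.range_subset_iff.mpr fun i => ⟨Fin.castLE hNM i, rfl⟩

lemma iSup_shiftSpan (a : ℕ → K) :
    ⨆ N, shiftSpan a N = span K (Set.range fun k => shift k a) := by
  refine le_antisymm (iSup_le fun N => span_mono ?_) (span_le.mpr ?_)
  · exact Set.range_subset_iff.mpr fun i => ⟨i, rfl⟩
  · rintro _ ⟨k, rfl⟩
    exact mem_iSup_of_mem (k + 1) (subset_span ⟨Fin.last k, rfl⟩)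

theorem isCFinite_iff_exists_shift_mem_shiftSpan {a : ℕ → K} :
    IsCFinite a ↔ ∃ N, shift N a ∈ shiftSpan a N := by
  simp only [shiftSpan, mem_span_range_iff_exists_fun, funext_iff, Finset.sum_apply,
    Pi.smul_apply, smul_eq_mul, shift, LinearMap.funLeft_apply, IsCFinite]
  exact exists_congr fun N => ⟨fun ⟨c, hc⟩ => ⟨c, fun n => (hc n).symm⟩,
    fun ⟨c, hc⟩ => ⟨c, fun n => (hc n).symm⟩⟩

lemma forall_shift_mem_shiftSpan {a : ℕ → K} {L : ℕ} (h : shift L a ∈ shiftSpan a L) :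
    ∀ k, shift k a ∈ shiftSpan a L := by
  have invariant : (shiftSpan a L).map (shift 1) ≤ shiftSpan a L := by
    rw [shiftSpan, map_span_le]
    rintro _ ⟨i, rfl⟩
    rw [← shift_succ]
    rcases (show (i : ℕ) + 1 ≤ L from i.isLt).lt_or_eq with hi | hi
    · exact subset_span ⟨⟨i + 1, hi⟩, rfl⟩
    · rwa [hi]
  intro k
  induction k with
  | zero =>
    cases L with
    | zero => exact h
    | succ l => exact subset_span ⟨0, rfl⟩
  | succ k ih => exact shift_succ k a ▸ invariant (mem_map_of_mem ih)

theorem isCFinite_iff_exists_fg {a : ℕ → K} :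
    IsCFinite a ↔ ∃ W : Submodule K (ℕ → K), W.FG ∧ ∀ k, shift k a ∈ W := by
  rw [isCFinite_iff_exists_shift_mem_shiftSpan]
  constructor
  · rintro ⟨N, hN⟩
    exact ⟨shiftSpan a N, fg_span (Set.finite_range _), forall_shift_mem_shiftSpan hN⟩
  · rintro ⟨W, hW, haW⟩
    have hfg : (span K (Set.range fun k => shift k a)).FG :=
      hW.of_le (span_le.mpr (Set.range_subset_iff.mpr haW))
    obtain ⟨N, hN⟩ :=
      hfg.stabilizes_of_iSup_eq ⟨shiftSpan a, shiftSpan_mono a⟩ (iSup_shiftSpan a)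
    exact ⟨N, hN.le (subset_span ⟨N, rfl⟩)⟩

end CFinite

section Closure

open CFinite

variable {K : Type*} [Field K]

lemma isCFinite_const (k : K) : IsCFinite fun _ => k :=
  isCFinite_iff_exists_fg.mpr ⟨K ∙ fun _ => k, Submodule.fg_span_singleton _,
    fun _ => Submodule.mem_span_singleton_self _⟩

lemma IsCFinite.add {a b : ℕ → K} (ha : IsCFinite a) (hb : IsCFinite b) :
    IsCFinite fun n => a n + b n := by
  obtain ⟨V, hV, haV⟩ := isCFinite_iff_exists_fg.mp ha
  obtain ⟨W, hW, hbW⟩ := isCFinite_iff_exists_fg.mp hb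
  exact isCFinite_iff_exists_fg.mpr ⟨V ⊔ W, hV.sup hW,
    fun k => Submodule.add_mem_sup (haV k) (hbW k)⟩

lemma IsCFinite.const_mul {a : ℕ → K} (ha : IsCFinite a) (k : K) :
    IsCFinite fun n => k * a n := by
  obtain ⟨V, hV, haV⟩ := isCFinite_iff_exists_fg.mp ha
  exact isCFinite_iff_exists_fg.mpr ⟨V, hV, fun j => V.smul_mem k (haV j)⟩

lemma IsCFinite.mul {a b : ℕ → K} (ha : IsCFinite a) (hb : IsCFinite b) :
    IsCFinite fun n => a n * b n := by
  obtain ⟨V, hV, haV⟩ := isCFinite_iff_exists_fg.mp ha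
  obtain ⟨W, hW, hbW⟩ := isCFinite_iff_exists_fg.mp hb
  exact isCFinite_iff_exists_fg.mpr ⟨V * W, hV.mul hW,
    fun k => Submodule.mul_mem_mul (haV k) (hbW k)⟩

end Closure

theorem cfinite_subalgebra (K : Type*) [Field K] :
    (∀ k : K, IsCFinite (fun _ => k)) ∧
    (∀ a b : ℕ → K, IsCFinite a → IsCFinite b → IsCFinite (fun n => a n + b n)) ∧
    (∀ (a : ℕ → K) (k : K), IsCFinite a → IsCFinite (fun n => k * a n)) ∧
    (∀ a b : ℕ → K, IsCFinite a → IsCFinite b → IsCFinite (fun n => a n * b n)) :=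
  ⟨isCFinite_const, fun _ _ => .add, fun _ k ha => ha.const_mul k, fun _ _ => .mul⟩
end

section
/- If a : ℕ → K is C-finite, then for any fixed positive integer k and any residue r with 0 ≤ r < k, the subsequence n ↦ a(kn + r) is C-finite. -/
theorem cfinite_subsequence {K : Type*} [Field K] (a : ℕ → K) (ha : IsCFinite a)
    (k : ℕ) (hk : 0 < k) (r : ℕ) (hr : r < k) :
    IsCFinite (fun n => a (k * n + r)) := by
  obtain ⟨L, c, hc⟩ := ha
  rcases Nat.eq_zero_or_pos L with hL0 | hL
  · subst hL0
    refine ⟨0, Fin.elim0, fun n => ?_⟩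
    have h0 : a (k * n + r) = 0 := by simpa using hc (k * n + r)
    simpa using h0
  · -- companion matrix
    set M : Matrix (Fin L) (Fin L) K := fun i j =>
      if (i : ℕ) + 1 < L then (if (j : ℕ) = (i : ℕ) + 1 then 1 else 0) else c j with hM
    set v : ℕ → Fin L → K := fun n i => a (n + i) with hv
    have hstep : ∀ n, M.mulVec (v n) = v (n + 1) := by
      intro n
      funext i
      by_cases h : (i : ℕ) + 1 < L
      · have h1 : M.mulVec (v n) i
            = ∑ j : Fin L, (if (j : ℕ) = (i : ℕ) + 1 then (1 : K) else 0) * v n j := by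
          simp [Matrix.mulVec, dotProduct, hM, h]
        rw [h1, Finset.sum_eq_single (⟨(i : ℕ) + 1, h⟩ : Fin L)]
        · simp only [hv]
          norm_num
          congr 1
          omega
        · intro j _ hj
          have : (j : ℕ) ≠ (i : ℕ) + 1 := by
            intro hcon; apply hj; apply Fin.ext; simpa using hcon
          simp [this]
        · intro hcon; exact absurd (Finset.mem_univ _) hcon
      · have hi : (i : ℕ) + 1 = L := by have := i.isLt; omega
        have h1 : M.mulVec (v n) i = ∑ j : Fin L, c j * v n j := by
          simp [Matrix.mulVec, dotProduct, hM, h]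
        rw [h1]
        have h2 : ∑ j : Fin L, c j * v n j = a (n + L) := (hc n).symm
        rw [h2]
        simp only [hv]
        congr 1
        omega
    have hpow : ∀ m n, (M ^ m).mulVec (v n) = v (n + m) := by
      intro m
      induction m with
      | zero => intro n; simp
      | succ m ih =>
        intro n
        rw [pow_succ, ← Matrix.mulVec_mulVec, hstep, ih,
          show n + 1 + m = n + (m + 1) from by omega]
    set N : Matrix (Fin L) (Fin L) K := M ^ k with hN
    set p : Polynomial K := N.charpoly with hp
    have hdeg : p.natDegree = L := by
      rw [hp, Matrix.charpoly_natDegree_eq_dim, Fintype.card_fin]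
    have hmon : p.Monic := N.charpoly_monic
    have hCH : Polynomial.aeval N p = 0 := N.aeval_self_charpoly
    have hsum : (N ^ L : Matrix (Fin L) (Fin L) K)
        = ∑ i : Fin L, (-(p.coeff i)) • N ^ (i : ℕ) := by
      have h1 : Polynomial.aeval N p
          = ∑ i ∈ Finset.range (p.natDegree + 1), p.coeff i • N ^ i :=
        Polynomial.aeval_eq_sum_range (p := p) N
      rw [hCH] at h1
      rw [hdeg, Finset.sum_range_succ] at h1
      have hcL : p.coeff L = 1 := by
        have := hmon.coeff_natDegree
        rwa [hdeg] at this
      rw [hcL, one_smul] at h1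
      have h2 : (N ^ L : Matrix (Fin L) (Fin L) K)
          = -∑ i ∈ Finset.range L, p.coeff i • N ^ i := by
        linear_combination (norm := (abel_nf; skip)) -h1
      rw [h2, ← Finset.sum_neg_distrib]
      rw [← Fin.sum_univ_eq_sum_range (fun i => -(p.coeff i • N ^ i))]
      congr 1
      funext i
      rw [neg_smul]
    refine ⟨L, fun i => -(p.coeff i), fun n => ?_⟩
    have i0 : Fin L := ⟨0, hL⟩
    have key1 : (N ^ L).mulVec (v (k * n + r)) = v (k * (n + L) + r) := by
      rw [hN, ← pow_mul, hpow, show k * n + r + k * L = k * (n + L) + r from by ring]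
    have key2 : ∀ i : Fin L, (N ^ (i : ℕ)).mulVec (v (k * n + r)) = v (k * (n + i) + r) := by
      intro i
      rw [hN, ← pow_mul, hpow, show k * n + r + k * (i : ℕ) = k * (n + i) + r from by ring]
    have eval : ∀ w : Fin L → K,
        ((∑ i : Fin L, (-(p.coeff i)) • N ^ (i : ℕ)).mulVec w) ⟨0, hL⟩
          = ∑ i : Fin L, (-(p.coeff i)) * ((N ^ (i : ℕ)).mulVec w ⟨0, hL⟩) := by
      intro w
      simp only [Matrix.mulVec, dotProduct, Finset.sum_apply, Matrix.smul_apply,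
        Matrix.sum_apply, smul_eq_mul, Finset.sum_mul, Finset.mul_sum]
      rw [Finset.sum_comm]
      exact Finset.sum_congr rfl fun _ _ => Finset.sum_congr rfl fun _ _ => mul_assoc _ _ _
    have final := congrArg (fun f => f (⟨0, hL⟩ : Fin L)) key1
    rw [hsum, eval] at final
    have hv0 : ∀ m, v m ⟨0, hL⟩ = a m := by
      intro m; simp [hv]
    calc a (k * (n + L) + r) = v (k * (n + L) + r) ⟨0, hL⟩ := (hv0 _).symm
      _ = ∑ i : Fin L, (-(p.coeff i)) * ((N ^ (i : ℕ)).mulVec (v (k * n + r)) ⟨0, hL⟩) :=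
          final.symm
      _ = ∑ i : Fin L, (-(p.coeff i)) * a (k * (n + i) + r) := by
          refine Finset.sum_congr rfl fun i _ => ?_
          rw [key2 i, hv0]
end

section
/- Let B_2(n) be the sequence defined by the generating function ∑_{n≥0} B_2(n) t^n = 1/((1+t)(1 - 3t + t^2)), i.e., B_2(0)=1, B_2(1)=2, B_2(2)=6 and B_2(n) = 2B_2(n-1) + 2B_2(n-2) - B_2(n-3) for n ≥ 3. Then B_2(n) = F_{n+1}·F_{n+2} for all n ≥ 0. -/
theorem B2_eq_fib_product (B2 : ℕ → ℤ)
    (h0 : B2 0 = 1) (h1 : B2 1 = 2) (h2 : B2 2 = 6)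
    (hrec : ∀ n : ℕ, B2 (n + 3) = 2 * B2 (n + 2) + 2 * B2 (n + 1) - B2 n) :
    ∀ n : ℕ, B2 n = Nat.fib (n + 1) * Nat.fib (n + 2) := by
  have key : ∀ n : ℕ, B2 n = Nat.fib (n + 1) * Nat.fib (n + 2) ∧
      B2 (n + 1) = Nat.fib (n + 2) * Nat.fib (n + 3) ∧
      B2 (n + 2) = Nat.fib (n + 3) * Nat.fib (n + 4) := by
    intro n
    induction n with
    | zero => refine ⟨?_, ?_, ?_⟩ <;> simp [h0, h1, h2, Nat.fib]
    | succ k ih =>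
      obtain ⟨ha, hb, hc⟩ := ih
      refine ⟨hb, hc, ?_⟩
      rw [hrec k, ha, hb, hc]
      have e1 : Nat.fib (k + 4) = Nat.fib (k + 2) + Nat.fib (k + 3) := Nat.fib_add_two
      have e2 : Nat.fib (k + 5) = Nat.fib (k + 3) + Nat.fib (k + 4) := Nat.fib_add_two
      have e3 : Nat.fib (k + 3) = Nat.fib (k + 1) + Nat.fib (k + 2) := Nat.fib_add_two
      push_cast [show k + 1 + 3 = k + 4 by ring, show k + 1 + 4 = k + 5 by ring, e1, e2, e3]
      ring
  exact fun n => (key n).1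
end
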